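/- Stability of the maximum entropy measure. Let 𝒱 = (v_i : i∈[n]) be a family of vectors in ℤ^D and z ∈ ℤ^D with ℳ^𝒱_z ≠ ∅. Let μ_p ∈ ℳ^𝒱_z be the maximum-entropy element (a product measure on {0,1}ⁿ with weights p = (p_i)), and let μ_p̃ ∈ ℳ^𝒱_z be any product measure with weights p̃ = (p̃_i). If ‖p − p̃‖₁ = Σ_{i∈[n]} |p_i − p̃_i| > δn for some δ > 0, then H(μ_p̃) < H(μ_p) − δ²n. -/

import Mathlib

open Finset

noncomputable section

/-- Evaluation of a family of vectors at a 0/1 vector: `𝒱(a) d = Σ_{i : a i = 1} v i d`. -/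
def bEval {n D : ℕ} (v : Fin n → Fin D → ℤ) (a : Fin n → Bool) (d : Fin D) : ℤ :=
  ∑ i, if a i then v i d else 0

/-- Product measure on `{0,1}ⁿ` with `p i` the probability of `1` in coordinate `i`. -/
def prodMeasB {n : ℕ} (p : Fin n → ℝ) (a : Fin n → Bool) : ℝ :=
  ∏ i, if a i then p i else 1 - p i

/-- Entropy (base 2) of a finitely supported measure. -/
noncomputable def entropy {α : Type*} [Fintype α] (μ : α → ℝ) : ℝ :=
  -∑ x, μ x * Real.logb 2 (μ x)

/-- `μ ∈ ℳ^𝒱_z`: a probability measure on `{0,1}ⁿ` with `E_{a∼μ} 𝒱(a) = z`. -/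
def MemM {n D : ℕ} (v : Fin n → Fin D → ℤ) (z : Fin D → ℤ)
    (μ : (Fin n → Bool) → ℝ) : Prop :=
  (∀ x, 0 ≤ μ x) ∧ (∑ x, μ x = 1) ∧
    ∀ d, ∑ a : Fin n → Bool, μ a * (bEval v a d : ℝ) = (z d : ℝ)

/-!
The midpoint `q = (p + p̃)/2` again gives a product measure in `ℳ^𝒱_z`, since for product
measures the constraint `E 𝒱 = z` is linear in the weights. The entropy of a product measure is the
sum of the binary entropies of its weights, and binary entropy is `4`-strongly concave on `[0, 1]`
(its second derivative is `-1/(t(1-t)) ≤ -4`), so `H(μ_q) ≥ (H(μ_p) + H(μ_p̃))/2 + ‖p - p̃‖₂²/2`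
in nats. Maximality of `μ_p` then gives `H(μ_p̃) ≤ H(μ_p) - ‖p - p̃‖₂²`, and Cauchy–Schwarz turns
`‖p - p̃‖₁ > δn` into `‖p - p̃‖₂² > δ²n`; passing to bits only enlarges the gap.
-/

open Real

theorem negMulLog_prod {ι : Type*} (s : Finset ι) (x : ι → ℝ) :
    negMulLog (∏ i ∈ s, x i) = ∑ i ∈ s, (∏ j ∈ s, x j) * -log (x i) := by
  by_cases h : ∏ i ∈ s, x i = 0
  · simp [h]
  · rw [negMulLog, log_prod fun i hi => (prod_ne_zero_iff.1 h) i hi, ← mul_sum, sum_neg_distrib]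
    ring

section ProductWeights

variable {ι β : Type*} [Fintype ι] [DecidableEq ι] [Fintype β] {f : ι → β → ℝ}

theorem sum_prod_apply_eq_one (hf : ∀ i, ∑ b, f i b = 1) :
    ∑ a : ι → β, ∏ i, f i (a i) = 1 := by
  rw [← Fintype.prod_sum, Finset.prod_eq_one fun i _ => hf i]

theorem sum_prod_apply_mul_apply (hf : ∀ i, ∑ b, f i b = 1) (j : ι) (g : β → ℝ) :
    ∑ a : ι → β, (∏ i, f i (a i)) * g (a j) = ∑ b, f j b * g b := by
  let F : ι → β → ℝ := fun i b => if i = j then f i b * g b else f i b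
  have hF : ∀ a : ι → β, (∏ i, f i (a i)) * g (a j) = ∏ i, F i (a i) := by
    intro a
    rw [← Finset.mul_prod_erase _ _ (mem_univ j), ← Finset.mul_prod_erase _ _ (mem_univ j)]
    simp only [F, if_pos rfl]
    rw [Finset.prod_congr rfl fun i hi => if_neg (ne_of_mem_erase hi)]
    ring
  simp_rw [hF, ← Fintype.prod_sum]
  rw [← Finset.mul_prod_erase _ _ (mem_univ j), Finset.prod_eq_one fun i hi => ?_]
  · simp [F]
  · simp only [F, if_neg (ne_of_mem_erase hi), hf i]

theorem sum_negMulLog_prod_apply (hf : ∀ i, ∑ b, f i b = 1) :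
    ∑ a : ι → β, negMulLog (∏ i, f i (a i)) = ∑ i, ∑ b, negMulLog (f i b) := by
  simp_rw [negMulLog_prod]
  rw [Finset.sum_comm]
  refine Finset.sum_congr rfl fun i _ => ?_
  rw [sum_prod_apply_mul_apply hf i fun b => -log (f i b)]
  simp only [negMulLog, mul_neg, neg_mul]

end ProductWeights

theorem entropy_eq_sum_negMulLog_div_log_two {α : Type*} [Fintype α] (μ : α → ℝ) :
    entropy μ = (∑ x, negMulLog (μ x)) / log 2 := by
  rw [entropy, sum_div, ← sum_neg_distrib]
  refine sum_congr rfl fun x _ => ?_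
  rw [negMulLog, logb]
  ring

section ProductMeasure

variable {n : ℕ} (p : Fin n → ℝ)

theorem sum_ite_bool_eq_one (i : Fin n) : ∑ b : Bool, (if b then p i else 1 - p i) = 1 := by
  simp

theorem sum_prodMeasB : ∑ a, prodMeasB p a = 1 :=
  sum_prod_apply_eq_one (sum_ite_bool_eq_one p)

theorem prodMeasB_nonneg {p : Fin n → ℝ} (hp : ∀ i, p i ∈ Set.Icc (0 : ℝ) 1) (a : Fin n → Bool) :
    0 ≤ prodMeasB p a :=
  prod_nonneg fun i _ => by split_ifs <;> linarith [(hp i).1, (hp i).2]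

theorem entropy_prodMeasB :
    entropy (prodMeasB p) = (∑ i, binEntropy (p i)) / log 2 := by
  simp only [entropy_eq_sum_negMulLog_div_log_two, prodMeasB]
  rw [sum_negMulLog_prod_apply (sum_ite_bool_eq_one p)]
  simp [binEntropy_eq_negMulLog_add_negMulLog_one_sub]

theorem sum_prodMeasB_mul_bEval {D : ℕ} (v : Fin n → Fin D → ℤ) (d : Fin D) :
    ∑ a, prodMeasB p a * (bEval v a d : ℝ) = ∑ i, p i * (v i d : ℝ) := by
  simp only [prodMeasB, bEval, Int.cast_sum, Int.cast_ite, Int.cast_zero, mul_sum]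
  rw [Finset.sum_comm]
  refine Finset.sum_congr rfl fun i _ => ?_
  rw [sum_prod_apply_mul_apply (sum_ite_bool_eq_one p) i fun b => if b then (v i d : ℝ) else 0]
  simp

theorem memM_prodMeasB_iff {D : ℕ} (v : Fin n → Fin D → ℤ) (z : Fin D → ℤ)
    {p : Fin n → ℝ} (hp : ∀ i, p i ∈ Set.Icc (0 : ℝ) 1) :
    MemM v z (prodMeasB p) ↔ ∀ d, ∑ i, p i * (v i d : ℝ) = z d := by
  simp only [MemM, prodMeasB_nonneg hp, sum_prodMeasB, sum_prodMeasB_mul_bEval, implies_true,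
    true_and]

end ProductMeasure

theorem strongConcaveOn_binEntropy : StrongConcaveOn (Set.Icc 0 1) 4 binEntropy := by
  rw [strongConcaveOn_iff_convex]
  refine concaveOn_of_hasDerivWithinAt2_nonpos (convex_Icc 0 1) (by fun_prop)
    (f' := fun x => log (1 - x) - log x + 4 * x) (f'' := fun x => -1 / (1 - x) - 1 / x + 4)
    (fun x hx => ?_) (fun x hx => ?_) (fun x hx => ?_)
  all_goals
    simp only [interior_Icc, Set.mem_Ioo] at hx ⊢
    obtain ⟨hx0, hx1⟩ := hx
  · refine HasDerivAt.hasDerivWithinAt ?_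
    simp only [Real.norm_eq_abs, sq_abs]
    convert (hasDerivAt_binEntropy hx0.ne' hx1.ne).fun_add
      ((hasDerivAt_pow 2 x).const_mul (4 / 2 : ℝ)) using 1
    norm_num
    ring
  · have h1 := ((hasDerivAt_id' x).const_sub 1).log (sub_pos.2 hx1).ne'
    have h2 := (hasDerivAt_id' x).log hx0.ne'
    refine HasDerivAt.hasDerivWithinAt ?_
    convert (h1.fun_sub h2).fun_add ((hasDerivAt_id' x).const_mul 4) using 1
    ring
  · have hx : 0 < x * (1 - x) := mul_pos hx0 (by linarith)
    have : -1 / (1 - x) - 1 / x + 4 = -(1 - 2 * x) ^ 2 / (x * (1 - x)) := by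
      field_simp
      ring
    simp only [this]
    exact div_nonpos_of_nonpos_of_nonneg (by nlinarith [sq_nonneg (1 - 2 * x)]) hx.le

theorem binEntropy_add_sq_le_midpoint {x y : ℝ} (hx : x ∈ Set.Icc (0 : ℝ) 1)
    (hy : y ∈ Set.Icc (0 : ℝ) 1) :
    (binEntropy x + binEntropy y) / 2 + (x - y) ^ 2 / 2 ≤ binEntropy ((x + y) / 2) := by
  obtain ⟨-, hconc⟩ := strongConcaveOn_binEntropy
  have := hconc hx hy (a := 1 / 2) (b := 1 / 2) (by norm_num) (by norm_num) (by norm_num)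
  simp only [smul_eq_mul, Real.norm_eq_abs, sq_abs] at this
  convert this using 2 <;> ring

theorem memM_prodMeasB_midpoint {n D : ℕ} {v : Fin n → Fin D → ℤ} {z : Fin D → ℤ}
    {p p' : Fin n → ℝ} (hp : ∀ i, p i ∈ Set.Icc (0 : ℝ) 1) (hp' : ∀ i, p' i ∈ Set.Icc (0 : ℝ) 1)
    (hpM : MemM v z (prodMeasB p)) (hp'M : MemM v z (prodMeasB p')) :
    MemM v z (prodMeasB fun i => (p i + p' i) / 2) := by
  have hmid : ∀ i, (p i + p' i) / 2 ∈ Set.Icc (0 : ℝ) 1 := fun i =>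
    ⟨by linarith [(hp i).1, (hp' i).1], by linarith [(hp i).2, (hp' i).2]⟩
  rw [memM_prodMeasB_iff v z hmid]
  intro d
  have h := (memM_prodMeasB_iff v z hp).1 hpM d
  have h' := (memM_prodMeasB_iff v z hp').1 hp'M d
  simp only [add_div, add_mul, sum_add_distrib, div_mul_eq_mul_div, ← sum_div, h, h']
  ring

theorem sq_mul_card_lt_sum_sq {ι : Type*} {s : Finset ι} {f : ι → ℝ} {δ : ℝ} (hδ : 0 ≤ δ)
    (h : δ * #s < ∑ i ∈ s, |f i|) : δ ^ 2 * #s < ∑ i ∈ s, f i ^ 2 := by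
  have hs : (0 : ℝ) < #s := by
    rcases s.eq_empty_or_nonempty with rfl | hne
    · simp at h
    · exact_mod_cast hne.card_pos
  have hCS : (∑ i ∈ s, |f i|) ^ 2 ≤ #s * ∑ i ∈ s, f i ^ 2 := by
    simpa only [sq_abs] using sq_sum_le_card_mul_sum_sq (s := s) (f := fun i => |f i|)
  have := pow_lt_pow_left₀ h (by positivity) two_ne_zero
  refine lt_of_mul_lt_mul_left ?_ hs.le
  nlinarith

/-- **Stability of the maximum entropy measure.**  If `μ_p` is the maximum-entropy
element of `ℳ^𝒱_z`, `μ_p̃ ∈ ℳ^𝒱_z` is a product measure, and `‖p − p̃‖₁ > δn`,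
then `H(μ_p̃) < H(μ_p) − δ²n`. -/
theorem stability_of_max_entropy
    (n D : ℕ) (v : Fin n → Fin D → ℤ) (z : Fin D → ℤ)
    (p ptilde : Fin n → ℝ)
    (hp : ∀ i, p i ∈ Set.Icc (0:ℝ) 1) (hpt : ∀ i, ptilde i ∈ Set.Icc (0:ℝ) 1)
    (hpM : MemM v z (prodMeasB p))
    (hmax : ∀ μ, MemM v z μ → entropy μ ≤ entropy (prodMeasB p))
    (hptM : MemM v z (prodMeasB ptilde))
    (δ : ℝ) (hδ : 0 < δ)
    (hfar : δ * n < ∑ i, |p i - ptilde i|) :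
    entropy (prodMeasB ptilde) < entropy (prodMeasB p) - δ ^ 2 * n := by
  have hlog : 0 < log 2 := log_pos one_lt_two
  have hmax_mid : ∑ i, binEntropy ((p i + ptilde i) / 2) ≤ ∑ i, binEntropy (p i) := by
    have := hmax _ (memM_prodMeasB_midpoint hp hpt hpM hptM)
    rwa [entropy_prodMeasB, entropy_prodMeasB, div_le_div_iff_of_pos_right hlog] at this
  have hconc : ∑ i, ((binEntropy (p i) + binEntropy (ptilde i)) / 2 + (p i - ptilde i) ^ 2 / 2)
      ≤ ∑ i, binEntropy ((p i + ptilde i) / 2) :=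
    sum_le_sum fun i _ => binEntropy_add_sq_le_midpoint (hp i) (hpt i)
  set S := ∑ i, (p i - ptilde i) ^ 2
  have hgap : ∑ i, binEntropy (ptilde i) + S ≤ ∑ i, binEntropy (p i) := by
    simp only [sum_add_distrib, ← sum_div] at hconc
    linarith
  have hS : δ ^ 2 * n < S := by
    simpa using sq_mul_card_lt_sum_sq (s := univ) (f := fun i => p i - ptilde i) hδ.le
      (by simpa using hfar)
  rw [entropy_prodMeasB, entropy_prodMeasB]
  calc (∑ i, binEntropy (ptilde i)) / log 2
      ≤ (∑ i, binEntropy (p i)) / log 2 - S / log 2 := by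
        rw [← sub_div]
        gcongr
        linarith
    _ ≤ (∑ i, binEntropy (p i)) / log 2 - S := by
        gcongr
        exact le_div_self (sum_nonneg fun i _ => sq_nonneg _) hlog
          (log_two_lt_d9.le.trans (by norm_num))
    _ < (∑ i, binEntropy (p i)) / log 2 - δ ^ 2 * n := by linarith
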